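/- If (e_1,...,e_r) is a Wahl chain, i.e. a sequence of integers, each >= 2, with [e_1,...,e_r] = n^2/(n*a - 1) for some n >= 2 and 0 < a < n with gcd(a,n) = 1, then e_1 + e_2 + ... + e_r = 3r + 1. -/
import Mathlib


/-- Hirzebruch-Jung continued fraction value `[e₁,...,e_r] = e₁ - 1/[e₂,...,e_r]`. -/
def hjVal : List ℤ → ℚ
  | [] => 0
  | e :: l => (e : ℚ) - 1 / hjVal l

namespace WahlAux

/-- The basic 2x2 matrix for one continued fraction step. -/
def M2 (x : ℤ) : Matrix (Fin 2) (Fin 2) ℤ := !![x, -1; 1, 0]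

/-- Product of the step matrices of a list. -/
def Gm : List ℤ → Matrix (Fin 2) (Fin 2) ℤ
  | [] => 1
  | x :: l => M2 x * Gm l

lemma Gm_nil : Gm [] = 1 := rfl

lemma Gm_cons (x : ℤ) (l : List ℤ) : Gm (x :: l) = M2 x * Gm l := rfl

lemma Gm_append (l m : List ℤ) : Gm (l ++ m) = Gm l * Gm m := by
  induction l with
  | nil => simp [Gm_nil]
  | cons x t ih => simp [Gm_cons, ih, Matrix.mul_assoc]

lemma Gm_singleton (x : ℤ) : Gm [x] = M2 x := by
  simp [Gm_cons, Gm_nil]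

lemma Gm_cons_eta (x : ℤ) (l : List ℤ) :
    Gm (x :: l) = !![x * Gm l 0 0 - Gm l 1 0, x * Gm l 0 1 - Gm l 1 1;
                     Gm l 0 0, Gm l 0 1] := by
  rw [Gm_cons, M2]
  ext i j
  fin_cases i <;> fin_cases j <;>
    simp [Matrix.mul_apply, Fin.sum_univ_two] <;> ring

lemma Gm_cons00 (x : ℤ) (l : List ℤ) :
    Gm (x :: l) 0 0 = x * Gm l 0 0 - Gm l 1 0 := by rw [Gm_cons_eta]; simp

lemma Gm_cons01 (x : ℤ) (l : List ℤ) :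
    Gm (x :: l) 0 1 = x * Gm l 0 1 - Gm l 1 1 := by rw [Gm_cons_eta]; simp

lemma Gm_cons10 (x : ℤ) (l : List ℤ) :
    Gm (x :: l) 1 0 = Gm l 0 0 := by rw [Gm_cons_eta]; simp

lemma Gm_cons11 (x : ℤ) (l : List ℤ) :
    Gm (x :: l) 1 1 = Gm l 0 1 := by rw [Gm_cons_eta]; simp

lemma Gm_nil00 : Gm ([] : List ℤ) 0 0 = 1 := by simp [Gm_nil, Matrix.one_fin_two]
lemma Gm_nil10 : Gm ([] : List ℤ) 1 0 = 0 := by simp [Gm_nil, Matrix.one_fin_two]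

/-- Positivity: for a list of entries `≥ 2`, `0 ≤ q < p`. -/
lemma Gm_pos (e : List ℤ) (he : ∀ x ∈ e, 2 ≤ x) :
    0 ≤ Gm e 1 0 ∧ Gm e 1 0 < Gm e 0 0 := by
  induction e with
  | nil => simp [Gm_nil00, Gm_nil10]
  | cons x l ih =>
    have hx : 2 ≤ x := he x (by simp)
    obtain ⟨h1, h2⟩ := ih (fun y hy => he y (by simp [hy]))
    rw [Gm_cons00, Gm_cons10]
    constructor
    · linarith
    · nlinarith

lemma hjVal_eq_div (e : List ℤ) (he : ∀ x ∈ e, 2 ≤ x) :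
    hjVal e = (Gm e 0 0 : ℚ) / (Gm e 1 0 : ℚ) := by
  induction e with
  | nil => simp [hjVal, Gm_nil10]
  | cons x l ih =>
    have hl : ∀ y ∈ l, 2 ≤ y := fun y hy => he y (by simp [hy])
    obtain ⟨h1, h2⟩ := Gm_pos l hl
    have hp : (0 : ℤ) < Gm l 0 0 := lt_of_le_of_lt h1 h2
    have hpQ : (Gm l 0 0 : ℚ) ≠ 0 := by exact_mod_cast hp.ne'
    rw [hjVal, ih hl, Gm_cons00, Gm_cons10, one_div_div]
    push_cast
    field_simp

lemma one_lt_hjVal (e : List ℤ) (hne : e ≠ []) (he : ∀ x ∈ e, 2 ≤ x) :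
    1 < hjVal e := by
  obtain ⟨x, l, rfl⟩ := List.exists_cons_of_ne_nil hne
  have hl : ∀ y ∈ l, 2 ≤ y := fun y hy => he y (by simp [hy])
  obtain ⟨h1, h2⟩ := Gm_pos (x :: l) he
  obtain ⟨g1, g2⟩ := Gm_pos l hl
  rw [hjVal_eq_div _ he]
  rw [Gm_cons10] at *
  have hq : (0 : ℤ) < Gm l 0 0 := lt_of_le_of_lt g1 g2
  rw [one_lt_div (by exact_mod_cast hq)]
  exact_mod_cast h2

/-- Uniqueness of HJ continued fraction expansions with all entries `≥ 2`. -/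
lemma hjVal_unique : ∀ e f : List ℤ, (∀ x ∈ e, 2 ≤ x) → (∀ x ∈ f, 2 ≤ x) →
    hjVal e = hjVal f → e = f := by
  intro e
  induction e with
  | nil =>
    intro f _ hf h
    cases f with
    | nil => rfl
    | cons y m =>
      exfalso
      have := one_lt_hjVal (y :: m) (by simp) hf
      rw [← h] at this
      simp [hjVal] at this
      linarith
  | cons x l ih =>
    intro f he hf h
    cases f with
    | nil =>
      exfalso
      have := one_lt_hjVal (x :: l) (by simp) he
      rw [h] at this
      simp [hjVal] at this
      linarith
    | cons y m =>
      have hl : ∀ z ∈ l, 2 ≤ z := fun z hz => he z (by simp [hz])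
      have hm : ∀ z ∈ m, 2 ≤ z := fun z hz => hf z (by simp [hz])
      rw [hjVal, hjVal] at h
      rcases eq_or_ne l [] with rfl | hlne
      · rcases eq_or_ne m [] with rfl | hmne
        · -- both singletons
          simp [hjVal] at h
          norm_cast at h
          rw [h]
        · exfalso
          have h1m : 1 < hjVal m := one_lt_hjVal m hmne hm
          simp only [hjVal] at h
          have hu0 : 0 < 1 / hjVal m := by positivity
          have hu1 : 1 / hjVal m < 1 := by
            rw [div_lt_one (by linarith)]; linarith
          have hxy : (y : ℚ) - 1 < (x : ℚ) ∧ (x : ℚ) < (y : ℚ) := by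
            constructor <;> [linarith; linarith]
          have h1 : (y : ℤ) - 1 < x := by exact_mod_cast (by push_cast; exact hxy.1 : ((y : ℚ) - 1 < (x : ℚ)))
          have h2 : (x : ℤ) < y := by exact_mod_cast hxy.2
          omega
      · rcases eq_or_ne m [] with rfl | hmne
        · exfalso
          have h1l : 1 < hjVal l := one_lt_hjVal l hlne hl
          simp only [hjVal] at h
          have hu0 : 0 < 1 / hjVal l := by positivity
          have hu1 : 1 / hjVal l < 1 := by
            rw [div_lt_one (by linarith)]; linarith
          have hxy : (x : ℚ) - 1 < (y : ℚ) ∧ (y : ℚ) < (x : ℚ) := by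
            constructor <;> [linarith; linarith]
          have h1 : (x : ℤ) - 1 < y := by exact_mod_cast (by push_cast; exact hxy.1 : ((x : ℚ) - 1 < (y : ℚ)))
          have h2 : (y : ℤ) < x := by exact_mod_cast hxy.2
          omega
        · have h1l : 1 < hjVal l := one_lt_hjVal l hlne hl
          have h1m : 1 < hjVal m := one_lt_hjVal m hmne hm
          have hu0 : 0 < 1 / hjVal l := by positivity
          have hu1 : 1 / hjVal l < 1 := by rw [div_lt_one (by linarith)]; linarith
          have hv0 : 0 < 1 / hjVal m := by positivity
          have hv1 : 1 / hjVal m < 1 := by rw [div_lt_one (by linarith)]; linarith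
          have hxy : x = y := by
            have hlt1 : (x : ℚ) - (y : ℚ) < 1 := by linarith
            have hlt2 : (y : ℚ) - (x : ℚ) < 1 := by linarith
            have h1 : (x : ℤ) - y < 1 := by exact_mod_cast (by push_cast; linarith : ((x : ℚ) - (y : ℚ) < 1))
            have h2 : (y : ℤ) - x < 1 := by exact_mod_cast (by push_cast; linarith : ((y : ℚ) - (x : ℚ) < 1))
            omega
          subst hxy
          have hinv : 1 / hjVal l = 1 / hjVal m := by linarith
          have hval : hjVal l = hjVal m := by
            field_simp at hinv
            first
              | exact hinv
              | exact hinv.symm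
              | linarith
          rw [ih m hl hm hval]

/-- Reversal flips the off-diagonal signs and swaps them. -/
lemma Gm_reverse (l : List ℤ) :
    Gm l.reverse = !![Gm l 0 0, -(Gm l 1 0); -(Gm l 0 1), Gm l 1 1] := by
  induction l with
  | nil => simp [Gm_nil, Matrix.one_fin_two, Gm_nil00, Gm_nil10]
  | cons x t ih =>
    rw [List.reverse_cons, Gm_append, ih, Gm_singleton, M2,
      Gm_cons00, Gm_cons01, Gm_cons10, Gm_cons11]
    ext i j
    fin_cases i <;> fin_cases j <;>
      simp [Matrix.mul_apply, Fin.sum_univ_two] <;> ring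

/-- Operation B: add `1` to the first entry and append a `2`. -/
def opB : List ℤ → List ℤ
  | [] => []
  | x :: t => (x + 1) :: (t ++ [2])

/-- Operation A: prepend a `2` and add `1` to the last entry. -/
def opA (l : List ℤ) : List ℤ := (opB l.reverse).reverse

/-- The matrix of the Wahl chain of type `(n, a)`. -/
def W (n a : ℤ) : Matrix (Fin 2) (Fin 2) ℤ :=
  !![n ^ 2, -(n * (n - a) - 1); n * a - 1, 1 - a * (n - a)]

lemma W_transpose_flip (n a : ℤ) :
    !![W n a 0 0, -(W n a 1 0); -(W n a 0 1), W n a 1 1] = W n (n - a) := by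
  ext i j
  fin_cases i <;> fin_cases j <;> simp [W] <;> ring

lemma Gm_opB (n a : ℤ) (e : List ℤ) (hne : e ≠ []) (hG : Gm e = W n a) :
    Gm (opB e) = W (n + a) a := by
  obtain ⟨x, t, rfl⟩ := List.exists_cons_of_ne_nil hne
  have h00 : x * Gm t 0 0 - Gm t 1 0 = n ^ 2 := by
    have := congrFun (congrFun hG 0) 0; rwa [Gm_cons00] at this
  have h01 : x * Gm t 0 1 - Gm t 1 1 = -(n * (n - a) - 1) := by
    have := congrFun (congrFun hG 0) 1; rwa [Gm_cons01] at this
  have h10 : Gm t 0 0 = n * a - 1 := by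
    have := congrFun (congrFun hG 1) 0; rwa [Gm_cons10] at this
  have h11 : Gm t 0 1 = 1 - a * (n - a) := by
    have := congrFun (congrFun hG 1) 1; rwa [Gm_cons11] at this
  have g10 : Gm t 1 0 = x * (n * a - 1) - n ^ 2 := by rw [h10] at h00; linarith
  have g11 : Gm t 1 1 = x * (1 - a * (n - a)) + (n * (n - a) - 1) := by
    rw [h11] at h01; linarith
  show Gm ((x + 1) :: (t ++ [2])) = W (n + a) a
  rw [Gm_cons_eta]
  have hta : ∀ i j, Gm (t ++ [2]) i j = (Gm t * M2 2) i j := by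
    intro i j; rw [Gm_append, Gm_singleton]
  ext i j
  fin_cases i <;> fin_cases j <;>
    simp [hta, M2, W, Matrix.mul_apply, Fin.sum_univ_two, h10, h11, g10, g11] <;> ring

lemma Gm_opA (n a : ℤ) (e : List ℤ) (hne : e ≠ []) (hG : Gm e = W n a) :
    Gm (opA e) = W (2 * n - a) n := by
  have hrev : Gm e.reverse = W n (n - a) := by
    rw [Gm_reverse, hG, W_transpose_flip]
  have hrne : e.reverse ≠ [] := by simpa using hne
  have hB : Gm (opB e.reverse) = W (n + (n - a)) (n - a) := Gm_opB _ _ _ hrne hrev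
  have hBne : opB e.reverse ≠ [] := by
    obtain ⟨x, t, hxt⟩ := List.exists_cons_of_ne_nil hrne
    rw [hxt]; simp [opB]
  rw [opA, Gm_reverse, hB, W_transpose_flip]
  have h1 : n + (n - a) = 2 * n - a := by ring
  have h2 : n + (n - a) - (n - a) = n := by ring
  rw [h1] at *
  rw [show (2 * n - a) - (n - a) = n by ring] at *

lemma opB_sum (x : ℤ) (t : List ℤ) : (opB (x :: t)).sum = (x :: t).sum + 3 := by
  simp [opB]; ring

lemma opB_length (x : ℤ) (t : List ℤ) : (opB (x :: t)).length = (x :: t).length + 1 := by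
  simp [opB]

lemma opB_mem (x : ℤ) (t : List ℤ) (he : ∀ y ∈ x :: t, 2 ≤ y) :
    ∀ y ∈ opB (x :: t), 2 ≤ y := by
  intro y hy
  simp only [opB, List.mem_cons, List.mem_append] at hy
  rcases hy with rfl | hy | hy
  · have := he x (by simp); linarith
  · exact he y (by simp [hy])
  · simp at hy; omega

lemma opA_sum (e : List ℤ) (hne : e ≠ []) : (opA e).sum = e.sum + 3 := by
  have hrne : e.reverse ≠ [] := by simpa using hne
  obtain ⟨x, t, hxt⟩ := List.exists_cons_of_ne_nil hrne
  have : (opB e.reverse).sum = e.reverse.sum + 3 := by rw [hxt]; exact opB_sum x t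
  rw [opA, List.sum_reverse, this, List.sum_reverse]

lemma opA_length (e : List ℤ) (hne : e ≠ []) : (opA e).length = e.length + 1 := by
  have hrne : e.reverse ≠ [] := by simpa using hne
  obtain ⟨x, t, hxt⟩ := List.exists_cons_of_ne_nil hrne
  have : (opB e.reverse).length = e.reverse.length + 1 := by rw [hxt]; exact opB_length x t
  rw [opA, List.length_reverse, this, List.length_reverse]

lemma opA_mem (e : List ℤ) (hne : e ≠ []) (he : ∀ y ∈ e, 2 ≤ y) :
    ∀ y ∈ opA e, 2 ≤ y := by
  have hrne : e.reverse ≠ [] := by simpa using hne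
  obtain ⟨x, t, hxt⟩ := List.exists_cons_of_ne_nil hrne
  intro y hy
  rw [opA, List.mem_reverse, hxt] at hy
  refine opB_mem x t ?_ y hy
  intro z hz
  exact he z (by rw [← List.mem_reverse, hxt]; exact hz)

/-- The Wahl chain for parameters `(n, a)`. -/
def wchain (n a : ℕ) : List ℤ :=
  if h : n ≤ 2 ∨ a = 0 ∨ n ≤ a then [4]
  else if h2 : 2 * a < n then opB (wchain (n - a) a)
  else opA (wchain a (2 * a - n))
termination_by n
decreasing_by
  · omega
  · omega

lemma wchain_spec : ∀ n a : ℕ, 2 ≤ n → 1 ≤ a → a < n → Nat.gcd a n = 1 →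
    (∀ x ∈ wchain n a, 2 ≤ x) ∧
      (wchain n a).sum = 3 * ((wchain n a).length : ℤ) + 1 ∧
      Gm (wchain n a) = W (n : ℤ) (a : ℤ) := by
  intro n
  induction n using Nat.strong_induction_on with
  | _ n ih =>
    intro a h2 h1 han hg
    rw [wchain]
    split_ifs with hbase hB
    · -- base case: n = 2, a = 1
      have hn2 : n = 2 := by omega
      have ha1 : a = 1 := by omega
      subst hn2; subst ha1
      refine ⟨by intro x hx; simp at hx; omega, by simp, ?_⟩
      rw [Gm_singleton, M2, W]
      norm_num
    · -- case B : 2a < n, recurse on (n - a, a)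
      have hna2 : 2 ≤ n - a := by omega
      have hana : a < n - a := by omega
      have hgcd' : Nat.gcd a (n - a) = 1 := by
        have hd : Nat.gcd a (n - a) ∣ Nat.gcd a n := by
          refine Nat.dvd_gcd (Nat.gcd_dvd_left _ _) ?_
          have h1' : Nat.gcd a (n - a) ∣ a := Nat.gcd_dvd_left _ _
          have h2' : Nat.gcd a (n - a) ∣ n - a := Nat.gcd_dvd_right _ _
          have : a + (n - a) = n := by omega
          calc Nat.gcd a (n - a) ∣ a + (n - a) := Nat.dvd_add h1' h2'
            _ = n := this
        rw [hg] at hd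
        exact Nat.eq_one_of_dvd_one hd
      obtain ⟨hmem, hsum, hGm⟩ := ih (n - a) (by omega) a hna2 h1 hana hgcd'
      have hne : wchain (n - a) a ≠ [] := by
        intro hemp
        rw [hemp] at hsum
        simp at hsum
      obtain ⟨x, t, hxt⟩ := List.exists_cons_of_ne_nil hne
      have hcast : ((n - a : ℕ) : ℤ) = (n : ℤ) - a := by
        push_cast [Nat.cast_sub (le_of_lt han)]; ring
      rw [hcast] at hGm
      have hGB : Gm (opB (wchain (n - a) a)) = W ((n : ℤ) - a + a) a :=
        Gm_opB _ _ _ hne hGm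
      rw [show (n : ℤ) - a + a = (n : ℤ) by ring] at hGB
      refine ⟨?_, ?_, hGB⟩
      · rw [hxt]; exact opB_mem x t (hxt ▸ hmem)
      · rw [hxt, opB_sum, opB_length, ← hxt]
        push_cast
        push_cast at hsum
        linarith
    · -- case A : 2a ≥ n, recurse on (a, 2a - n)
      have ha2 : 2 ≤ a := by omega
      have h2an : n < 2 * a := by
        rcases Nat.lt_or_ge n (2 * a) with h | h
        · exact h
        · exfalso
          have : 2 * a = n := by omega
          have hdvd : a ∣ n := ⟨2, by omega⟩
          have := Nat.gcd_eq_left hdvd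
          omega
      have h2an1 : 1 ≤ 2 * a - n := by omega
      have h2ana : 2 * a - n < a := by omega
      have hgcd' : Nat.gcd (2 * a - n) a = 1 := by
        have hd : Nat.gcd (2 * a - n) a ∣ Nat.gcd a n := by
          refine Nat.dvd_gcd (Nat.gcd_dvd_right _ _) ?_
          have h1' : Nat.gcd (2 * a - n) a ∣ 2 * a - n := Nat.gcd_dvd_left _ _
          have h2' : Nat.gcd (2 * a - n) a ∣ a := Nat.gcd_dvd_right _ _
          have h3' : Nat.gcd (2 * a - n) a ∣ 2 * a := Dvd.dvd.mul_left h2' 2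
          have : 2 * a - (2 * a - n) = n := by omega
          calc Nat.gcd (2 * a - n) a ∣ 2 * a - (2 * a - n) := Nat.dvd_sub h3' h1'
            _ = n := this
        rw [hg] at hd
        exact Nat.eq_one_of_dvd_one hd
      obtain ⟨hmem, hsum, hGm⟩ := ih a (by omega) (2 * a - n) ha2 h2an1 h2ana hgcd'
      have hne : wchain a (2 * a - n) ≠ [] := by
        intro hemp
        rw [hemp] at hsum
        simp at hsum
      have hcast : ((2 * a - n : ℕ) : ℤ) = 2 * (a : ℤ) - n := by
        push_cast [Nat.cast_sub (le_of_lt h2an)]; ring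
      rw [hcast] at hGm
      have hGA : Gm (opA (wchain a (2 * a - n))) = W (2 * (a : ℤ) - (2 * (a : ℤ) - n)) a :=
        Gm_opA _ _ _ hne hGm
      rw [show 2 * (a : ℤ) - (2 * (a : ℤ) - n) = (n : ℤ) by ring] at hGA
      refine ⟨opA_mem _ hne hmem, ?_, hGA⟩
      rw [opA_sum _ hne, opA_length _ hne]
      push_cast
      linarith

end WahlAux

open WahlAux in
/-- The entries of a Wahl chain `(e₁,...,e_r)` sum to `3r + 1`. -/
theorem wahl_chain_sum (n a : ℤ) (hn : 2 ≤ n) (ha0 : 0 < a) (han : a < n)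
    (hgcd : Int.gcd a n = 1) (e : List ℤ) (he2 : ∀ x ∈ e, 2 ≤ x)
    (hval : hjVal e = ((n ^ 2 : ℤ) : ℚ) / ((n * a - 1 : ℤ) : ℚ)) :
    e.sum = 3 * (e.length : ℤ) + 1 := by
  set N := n.toNat with hN
  set A := a.toNat with hA
  have hNn : (N : ℤ) = n := Int.toNat_of_nonneg (by omega)
  have hAa : (A : ℤ) = a := Int.toNat_of_nonneg (by omega)
  have hN2 : 2 ≤ N := by omega
  have hA1 : 1 ≤ A := by omega
  have hAN : A < N := by omega
  have hg : Nat.gcd A N = 1 := by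
    have : Int.gcd a n = Nat.gcd A N := by
      rw [Int.gcd]
      congr 1
      · omega
      · omega
    omega
  obtain ⟨hmem, hsum, hGm⟩ := wchain_spec N A hN2 hA1 hAN hg
  rw [hNn, hAa] at hGm
  have h00 : W n a 0 0 = n ^ 2 := by simp [W]
  have h10 : W n a 1 0 = n * a - 1 := by simp [W]
  have hw : hjVal (wchain N A) = ((n ^ 2 : ℤ) : ℚ) / ((n * a - 1 : ℤ) : ℚ) := by
    rw [hjVal_eq_div _ hmem, hGm, h00, h10]
  have := hjVal_unique e (wchain N A) he2 hmem (by rw [hval, hw])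
  rw [this, hsum]
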